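/- Let N ≥ 2 and p ≥ 1 satisfy log(Np)/p < 1/√(2π), and let t̄ be the unique real number with Φ(t̄) = (1/N)^{1/p}. Then t̄ > 0 and t̄ ≥ √(2·log(p/(√(2π)·log N))) − 2. -/

import Mathlib

/-!
Write `a = log N / p`, so that `Φ(t̄) = e^{-a}`. Since `a < 1/√(2π) < log 2`, we get
`Φ(t̄) > 1/2 = Φ(0)`, whence `t̄ > 0`. For the second bound put `s = √(2 log (p / (√(2π) log N)))`,
chosen so that the density satisfies `φ(s) = a`. When `s > 2`, the density is at least `φ(s)` on
`[s - 2, s]`, so `Φ(s - 2) ≤ 1 - 2a < 1 - a ≤ e^{-a} = Φ(t̄)`, and monotonicity of `Φ` gives `s - 2 < t̄`.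
-/

open MeasureTheory ProbabilityTheory

/-- The standard normal cumulative distribution function `Φ`. -/
noncomputable def stdNormalCDF (t : ℝ) : ℝ :=
  ((ProbabilityTheory.gaussianReal 0 1) (Set.Iic t)).toReal

open Real Set

local notation "φ" => gaussianPDFReal 0 1

lemma gaussianPDFReal_zero_one (x : ℝ) : φ x = (√(2 * π))⁻¹ * exp (-x ^ 2 / 2) := by
  simp [gaussianPDFReal]

lemma gaussianPDFReal_zero_one_neg (x : ℝ) : φ (-x) = φ x := by
  simp [gaussianPDFReal_zero_one]

lemma gaussianPDFReal_zero_one_antitoneOn : AntitoneOn φ (Ici 0) := by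
  intro x hx y _ hxy
  rw [gaussianPDFReal_zero_one, gaussianPDFReal_zero_one]
  have : x ^ 2 ≤ y ^ 2 := pow_le_pow_left₀ hx hxy 2
  gcongr

lemma gaussianPDFReal_sqrt_two_mul_log {y : ℝ} (hy : 1 ≤ y) :
    φ √(2 * log y) = (√(2 * π))⁻¹ * y⁻¹ := by
  rw [gaussianPDFReal_zero_one, sq_sqrt (by positivity [log_nonneg hy]),
    show -(2 * log y) / 2 = -log y by ring, exp_neg, exp_log (by linarith)]

lemma stdNormalCDF_eq_cdf : stdNormalCDF = cdf (gaussianReal 0 1) := by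
  ext t
  rw [cdf_eq_real]
  rfl

lemma stdNormalCDF_monotone : Monotone stdNormalCDF :=
  stdNormalCDF_eq_cdf ▸ (cdf (gaussianReal 0 1)).mono

lemma stdNormalCDF_eq_integral (t : ℝ) : stdNormalCDF t = ∫ x in Iic t, φ x := by
  rw [stdNormalCDF, gaussianReal_apply_eq_integral 0 one_ne_zero, ENNReal.toReal_ofReal]
  exact setIntegral_nonneg measurableSet_Iic fun x _ ↦ gaussianPDFReal_nonneg 0 1 x

lemma stdNormalCDF_add_integral_Ioi (t : ℝ) : stdNormalCDF t + ∫ x in Ioi t, φ x = 1 := by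
  have hφ := integrable_gaussianPDFReal 0 1
  rw [stdNormalCDF_eq_integral, intervalIntegral.integral_Iic_add_Ioi hφ.integrableOn hφ.integrableOn]
  exact integral_gaussianPDFReal_eq_one 0 one_ne_zero

lemma stdNormalCDF_zero : stdNormalCDF 0 = 1 / 2 := by
  have hsymm : ∫ x in Ioi 0, φ x = stdNormalCDF 0 := by
    rw [stdNormalCDF_eq_integral, ← neg_zero, ← integral_comp_neg_Iic]
    simp only [gaussianPDFReal_zero_one_neg, neg_zero]
  linarith [stdNormalCDF_add_integral_Ioi 0]

lemma sub_mul_le_integral_Ioi_gaussianPDFReal {r s : ℝ} (hr : 0 ≤ r) (hrs : r ≤ s) :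
    (s - r) * φ s ≤ ∫ x in Ioi r, φ x := by
  have hφ := (integrable_gaussianPDFReal 0 1).integrableOn (s := Ioi r)
  calc (s - r) * φ s = ∫ _ in Ioc r s, φ s := by
        rw [setIntegral_const, measureReal_def, Real.volume_Ioc,
          ENNReal.toReal_ofReal (by linarith), smul_eq_mul]
    _ ≤ ∫ x in Ioc r s, φ x := by
        refine setIntegral_mono_on (integrableOn_const measure_Ioc_lt_top.ne)
          (hφ.mono_set Ioc_subset_Ioi_self) measurableSet_Ioc fun x hx ↦ ?_
        exact gaussianPDFReal_zero_one_antitoneOn (mem_Ici.2 (hr.trans hx.1.le))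
          (mem_Ici.2 (hr.trans hrs)) hx.2
    _ ≤ ∫ x in Ioi r, φ x :=
        setIntegral_mono_set hφ (.of_forall fun x ↦ gaussianPDFReal_nonneg 0 1 x)
          Ioc_subset_Ioi_self.eventuallyLE

lemma stdNormalCDF_sub_two_lt_exp {s : ℝ} (hs : 2 ≤ s) : stdNormalCDF (s - 2) < exp (-φ s) := by
  have htail := sub_mul_le_integral_Ioi_gaussianPDFReal (r := s - 2) (by linarith) (by linarith)
  have hpos := gaussianPDFReal_pos 0 1 s one_ne_zero
  linarith [stdNormalCDF_add_integral_Ioi (s - 2), add_one_le_exp (-φ s)]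

lemma one_div_sqrt_two_mul_pi_lt_log_two : 1 / √(2 * π) < log 2 := by
  have h2 : 2 < √(2 * π) := lt_sqrt_of_sq_lt (by nlinarith [pi_gt_three])
  calc 1 / √(2 * π) < 1 / 2 := one_div_lt_one_div_of_lt two_pos h2
    _ < log 2 := by linarith [log_two_gt_d9]

/-- If `Φ(t̄) = (1/N)^{1/p}` and `log(Np)/p < 1/√(2π)` with `N ≥ 2`, then `t̄ > 0` and
`t̄ ≥ √(2 log(p/(√(2π) log N))) - 2`. -/
theorem quantile_lower_bound (N p : ℕ) (hN : 2 ≤ N) (hp : 1 ≤ p)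
    (h : Real.log ((N : ℝ) * p) / p < 1 / Real.sqrt (2 * Real.pi))
    (tbar : ℝ)
    (htbar : stdNormalCDF tbar = (1 / (N : ℝ)) ^ ((1 : ℝ) / p)) :
    0 < tbar ∧
      Real.sqrt (2 * Real.log ((p : ℝ) / (Real.sqrt (2 * Real.pi) * Real.log N))) - 2 ≤ tbar := by
  have hN1 : (1 : ℝ) < N := by exact_mod_cast hN
  have hp1 : (1 : ℝ) ≤ p := by exact_mod_cast hp
  set a := log N / p with ha_def
  have ha0 : 0 < a := div_pos (log_pos hN1) (by positivity)
  have ha : a < 1 / √(2 * π) := lt_of_le_of_lt (div_le_div_of_nonneg_right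
    (log_le_log (by positivity) (le_mul_of_one_le_right (by positivity) hp1)) (by positivity)) h
  have hΦ : stdNormalCDF tbar = exp (-a) := by
    rw [htbar, rpow_def_of_pos (by positivity), one_div (N : ℝ), log_inv, ha_def]
    ring_nf
  have htbar_pos : 0 < tbar := by
    refine stdNormalCDF_monotone.reflect_lt ?_
    rw [stdNormalCDF_zero, hΦ, one_div, ← exp_log two_pos, ← exp_neg]
    exact exp_lt_exp.2 (by linarith [one_div_sqrt_two_mul_pi_lt_log_two])
  refine ⟨htbar_pos, ?_⟩
  set y := (p : ℝ) / (√(2 * π) * log N) with hy_def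
  have hy : y = (√(2 * π) * a)⁻¹ := by
    rw [hy_def, ha_def]
    field_simp
  have hy1 : 1 ≤ y := by
    rw [hy, one_le_inv₀ (by positivity), ← le_div_iff₀' (by positivity)]
    exact ha.le
  obtain hs | hs := le_or_gt √(2 * log y) 2
  · linarith
  have hφ : φ √(2 * log y) = a := by
    rw [gaussianPDFReal_sqrt_two_mul_log hy1, hy, inv_inv]
    field_simp
  have := stdNormalCDF_monotone.reflect_lt (hΦ ▸ hφ ▸ stdNormalCDF_sub_two_lt_exp hs.le)
  linarith
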